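/- Let P and Q be finite-dimensional posets with abs(P) ≥ dim(Q). Then dim(P × Q) = dim(P), and abs(P × Q) ≥ abs(P) − dim(Q) + abs(Q). -/

import Mathlib

universe u

/-- The order dimension of a poset: the least cardinal `κ` such that the partial
order is the intersection of `κ` linear orderings (each extending it). -/
noncomputable def orderDim (α : Type u) [PartialOrder α] : Cardinal.{u} :=
  sInf {κ : Cardinal.{u} | ∃ (ι : Type u) (r : ι → α → α → Prop),
    (∀ i, IsLinearOrder α (r i)) ∧
    (∀ x y : α, x ≤ y ↔ ∀ i, r i x y) ∧
    Cardinal.mk ι = κ}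

/-- The absorbency of a (finite-dimensional) poset `P`: the largest natural
number `n` such that taking the product of `P` with any `n`-tuple of (nonempty)
chains does not change the dimension. -/
noncomputable def absorb (P : Type u) [PartialOrder P] : ℕ :=
  sSup {n : ℕ | ∀ (T : Fin n → Type u) [∀ i, LinearOrder (T i)] [∀ i, Nonempty (T i)],
    orderDim (P × ∀ i, T i) = orderDim P}

/-- The bounded dimension of a (finite-dimensional) poset `P`: the greatest
natural number `n` such that some bounded subposet of `P` (equivalently, some
nonempty interval `[p, p']`) has dimension `n`. -/
noncomputable def bdDim (P : Type u) [PartialOrder P] : ℕ :=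
  sSup {n : ℕ | ∃ p p' : P, p ≤ p' ∧ orderDim ↥(Set.Icc p p') = n}

/-!
A poset of dimension `d` embeds into a product of `d` chains, and a product of at most `abs P`
chains can be padded with one-point chains to exactly `abs P` of them. So `P × Q` embeds into `P`
times `dim Q` chains, a poset of dimension `dim P`. For the absorbency, split
`(abs P - dim Q) + abs Q` chains into two groups: `Q` times the second group still has dimension
`dim Q`, hence embeds into `dim Q` chains, and `(P × Q) × ∏ T` embeds into `P` times `abs P`
chains. The supremum defining `abs (P × Q)` is attained because `P × 2ⁿ` contains the standard
example of dimension `n`, which bounds every absorbed `n` by `dim (P × Q)`.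
-/

open Cardinal

section Embeddings

variable {ι κ α β γ δ : Type*}

def OrderEmbedding.prodMap [PartialOrder α] [Preorder β] [PartialOrder γ] [Preorder δ]
    (f : α ↪o β) (g : γ ↪o δ) : α × γ ↪o β × δ :=
  OrderEmbedding.ofMapLEIff (Prod.map f g) fun _ _ => by simp [Prod.le_def]

def OrderEmbedding.prodMkRight [PartialOrder α] [Preorder β] (b : β) : α ↪o α × β :=
  OrderEmbedding.ofMapLEIff (fun a => (a, b)) fun _ _ => by simp

def OrderEmbedding.prodMkLeft [Preorder α] [PartialOrder β] (a : α) : β ↪o α × β :=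
  OrderEmbedding.ofMapLEIff (fun b => (a, b)) fun _ _ => by simp

def OrderEmbedding.piPrecomp (W : κ → Type*) [∀ k, PartialOrder (W k)] {σ : ι → κ}
    (hσ : σ.Surjective) : (∀ k, W k) ↪o ∀ i, W (σ i) :=
  OrderEmbedding.ofMapLEIff (fun (f : ∀ k, W k) i => f (σ i)) fun f g =>
    ⟨fun h k => by obtain ⟨i, rfl⟩ := hσ k; exact h i, fun h i => h (σ i)⟩

def OrderIso.sumPiEquivProdPi (W : ι ⊕ κ → Type*) [∀ s, Preorder (W s)] :
    (∀ s, W s) ≃o (∀ i, W (.inl i)) × ∀ j, W (.inr j) where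
  toEquiv := Equiv.sumPiEquivProdPi W
  map_rel_iff' := by simp [Prod.le_def, Pi.le_def, Sum.forall]

instance Sum.elim.instLinearOrder {T : ι → Type u} {S : κ → Type u} [∀ i, LinearOrder (T i)]
    [∀ j, LinearOrder (S j)] : ∀ s, LinearOrder (Sum.elim T S s)
  | .inl i => inferInstanceAs (LinearOrder (T i))
  | .inr j => inferInstanceAs (LinearOrder (S j))

instance Sum.elim.instNonempty {T : ι → Type u} {S : κ → Type u} [∀ i, Nonempty (T i)]
    [∀ j, Nonempty (S j)] : ∀ s, Nonempty (Sum.elim T S s)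
  | .inl i => inferInstanceAs (Nonempty (T i))
  | .inr j => inferInstanceAs (Nonempty (S j))

end Embeddings

section Realizers

variable {α β : Type u} [PartialOrder α] [PartialOrder β]

structure IsRealizer {ι : Type*} (r : ι → α → α → Prop) : Prop where
  isLinearOrder : ∀ i, IsLinearOrder α (r i)
  le_iff : ∀ x y : α, x ≤ y ↔ ∀ i, r i x y

theorem exists_linearExtension_of_not_le {x y : α} (hxy : ¬x ≤ y) :
    ∃ s : α → α → Prop, IsLinearOrder α s ∧ (∀ a b, a ≤ b → s a b) ∧ s y x := by
  -- force `y` below `x` by also relating everything below `y` to everything above `x`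
  let r : α → α → Prop := fun a b => a ≤ b ∨ (a ≤ y ∧ x ≤ b)
  have : IsPartialOrder α r :=
    { refl := fun a => Or.inl le_rfl
      trans := by
        rintro a b c (hab | ⟨hay, hxb⟩) (hbc | ⟨hby, hxc⟩)
        exacts [Or.inl (hab.trans hbc), Or.inr ⟨hab.trans hby, hxc⟩,
          Or.inr ⟨hay, hxb.trans hbc⟩, Or.inr ⟨hay, hxc⟩]
      antisymm := by
        rintro a b (hab | ⟨hay, hxb⟩) (hba | ⟨hby, hxa⟩)
        exacts [le_antisymm hab hba, absurd ((hxa.trans hab).trans hby) hxy,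
          absurd ((hxb.trans hba).trans hay) hxy, absurd (hxa.trans hay) hxy] }
  obtain ⟨s, hs, hrs⟩ := extend_partialOrder r
  exact ⟨s, hs, fun a b hab => hrs _ _ (Or.inl hab), hrs _ _ (Or.inr ⟨le_rfl, le_rfl⟩)⟩

theorem exists_isRealizer (α : Type u) [PartialOrder α] :
    ∃ (ι : Type u) (r : ι → α → α → Prop), IsRealizer r := by
  refine ⟨{s : α → α → Prop // IsLinearOrder α s ∧ ∀ a b, a ≤ b → s a b}, fun s => s.1,
    fun s => s.2.1, fun x y => ⟨fun h s => s.2.2 x y h, fun h => ?_⟩⟩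
  by_contra hxy
  obtain ⟨s, hs, hext, hyx⟩ := exists_linearExtension_of_not_le hxy
  exact hxy (antisymm (h ⟨s, hs, hext⟩) hyx).le

theorem IsRealizer.orderDim_le_mk {ι : Type u} {r : ι → α → α → Prop} (hr : IsRealizer r) :
    orderDim α ≤ #ι :=
  csInf_le' ⟨ι, r, hr.isLinearOrder, hr.le_iff, rfl⟩

theorem exists_isRealizer_mk_eq_orderDim (α : Type u) [PartialOrder α] :
    ∃ (ι : Type u) (r : ι → α → α → Prop), IsRealizer r ∧ #ι = orderDim α := by
  obtain ⟨ι, r, hr⟩ := exists_isRealizer α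
  obtain ⟨κ, s, hs, hs', hκ⟩ := csInf_mem (⟨_, ι, r, hr.isLinearOrder, hr.le_iff, rfl⟩ :
    {κ : Cardinal.{u} | ∃ (ι : Type u) (r : ι → α → α → Prop),
      (∀ i, IsLinearOrder α (r i)) ∧ (∀ x y : α, x ≤ y ↔ ∀ i, r i x y) ∧ #ι = κ}.Nonempty)
  exact ⟨κ, s, ⟨hs, hs'⟩, hκ⟩

theorem IsRealizer.comap {ι : Type*} {r : ι → β → β → Prop} (hr : IsRealizer r)
    (f : α ↪o β) : IsRealizer fun i a b => r i (f a) (f b) where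
  isLinearOrder i :=
    haveI := hr.isLinearOrder i
    (RelEmbedding.preimage f.toEmbedding (r i)).isLinearOrder
  le_iff x y := f.le_iff_le.symm.trans (hr.le_iff (f x) (f y))

theorem OrderEmbedding.orderDim_le (f : α ↪o β) : orderDim α ≤ orderDim β := by
  obtain ⟨ι, r, hr, hι⟩ := exists_isRealizer_mk_eq_orderDim β
  exact hι ▸ (hr.comap f).orderDim_le_mk

theorem orderDim_le_orderDim_prod_left [Nonempty β] :
    orderDim α ≤ orderDim (α × β) :=
  (OrderEmbedding.prodMkRight (Classical.arbitrary β)).orderDim_le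

theorem orderDim_le_orderDim_prod_right [Nonempty α] :
    orderDim β ≤ orderDim (α × β) :=
  (OrderEmbedding.prodMkLeft (Classical.arbitrary α)).orderDim_le

theorem orderDim_prod_eq_left [Subsingleton β] [Nonempty β] :
    orderDim (α × β) = orderDim α :=
  le_antisymm
    (OrderEmbedding.orderDim_le <| OrderEmbedding.ofMapLEIff Prod.fst fun x y => by
      simp [Prod.le_def, Subsingleton.elim x.2 y.2])
    orderDim_le_orderDim_prod_left

theorem mk_le_orderDim_of_standardExample {ι : Type u} (a b : ι → α)
    (hab : ∀ i j, i ≠ j → a i ≤ b j) (hba : ∀ i, ¬a i ≤ b i) : #ι ≤ orderDim α := by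
  obtain ⟨κ, r, hr, hκ⟩ := exists_isRealizer_mk_eq_orderDim α
  have hwit : ∀ i, ∃ k, ¬r k (a i) (b i) := fun i => by
    simpa [hr.le_iff] using hba i
  choose g hg using hwit
  -- if `g i = g j` with `i ≠ j`, then `a i ≤ b j < a j ≤ b i` in the chain `r (g i)`
  have hinj : Function.Injective g := fun i j hij => by
    by_contra hne
    have := hr.isLinearOrder (g i)
    have hji : r (g i) (b j) (a j) :=
      (total_of (r (g i)) _ _).resolve_right (hij ▸ hg j)
    exact hg i (_root_.trans (_root_.trans ((hr.le_iff _ _).1 (hab i j hne) _) hji)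
      ((hr.le_iff _ _).1 (hab j i (Ne.symm hne)) _))
  exact hκ ▸ mk_le_of_injective hinj

theorem natCast_le_orderDim_pi_bool (n : ℕ) :
    (n : Cardinal.{u}) ≤ orderDim (Fin n → ULift.{u} Bool) := by
  let a : ULift.{u} (Fin n) → Fin n → ULift.{u} Bool := fun j i => ⟨decide (i = j.down)⟩
  let b : ULift.{u} (Fin n) → Fin n → ULift.{u} Bool := fun j i => ⟨decide (i ≠ j.down)⟩
  have hab : ∀ i j, i ≠ j → a i ≤ b j := fun i j hij k => by
    by_cases hk : k = i.down
    · subst hk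
      simp [a, b, ULift.ext_iff.not.mp hij]
    · simp [a, b, ULift.up_le, hk]
  have hba : ∀ i, ¬a i ≤ b i := fun i h => absurd (h i.down) (by simp [a, b, ULift.up_le])
  simpa using mk_le_orderDim_of_standardExample a b hab hba

end Realizers

section Chains

variable {α : Type u}

noncomputable def LinOrd.ofIsLinearOrder (r : α → α → Prop) [IsLinearOrder α r] :
    LinOrd.{u} :=
  @LinOrd.of α
    { le := r
      le_refl := refl_of r
      le_trans := fun _ _ _ => trans_of r
      le_antisymm := fun _ _ => antisymm_of r
      le_total := total_of r
      toDecidableLE := Classical.decRel r }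

theorem exists_orderEmbedding_pi_of_orderDim_eq [PartialOrder α] {d : ℕ}
    (h : orderDim α = d) : ∃ C : Fin d → LinOrd.{u}, Nonempty (α ↪o ∀ i, C i) := by
  obtain ⟨ι, r, hr, hι⟩ := exists_isRealizer_mk_eq_orderDim α
  rw [h, mk_eq_nat_iff] at hι
  obtain ⟨e⟩ := hι
  have := hr.isLinearOrder
  refine ⟨fun i => .ofIsLinearOrder (r (e.symm i)),
    ⟨OrderEmbedding.ofMapLEIff (fun a _ => a) fun x y => ?_⟩⟩
  rw [hr.le_iff]
  refine ⟨fun h i => ?_, fun h j => h _⟩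
  have hi : r (e.symm (e i)) x y := h (e i)
  rwa [e.symm_apply_apply] at hi

end Chains

section Absorbency

variable {P Q : Type u} [PartialOrder P] [PartialOrder Q]

def AbsorbsChains (P : Type u) [PartialOrder P] (n : ℕ) : Prop :=
  ∀ (T : Fin n → Type u) [∀ i, LinearOrder (T i)] [∀ i, Nonempty (T i)],
    orderDim (P × ∀ i, T i) = orderDim P

theorem absorbsChains_zero (P : Type u) [PartialOrder P] : AbsorbsChains P 0 :=
  fun _ _ _ => orderDim_prod_eq_left

theorem absorbsChains_absorb (P : Type u) [PartialOrder P] : AbsorbsChains P (absorb P) := by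
  by_cases hb : BddAbove {n | AbsorbsChains P n}
  · exact Nat.sSup_mem ⟨0, absorbsChains_zero P⟩ hb
  · rw [show absorb P = 0 from Nat.sSup_of_not_bddAbove hb]
    exact absorbsChains_zero P

theorem AbsorbsChains.natCast_le_orderDim [Nonempty P] {n : ℕ} (h : AbsorbsChains P n) :
    (n : Cardinal) ≤ orderDim P :=
  calc (n : Cardinal) ≤ orderDim (Fin n → ULift.{u} Bool) := natCast_le_orderDim_pi_bool n
    _ ≤ orderDim (P × (Fin n → ULift.{u} Bool)) := orderDim_le_orderDim_prod_right
    _ = orderDim P := h _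

theorem AbsorbsChains.le_absorb [Nonempty P] {d n : ℕ} (hd : orderDim P = d)
    (h : AbsorbsChains P n) : n ≤ absorb P :=
  le_csSup ⟨d, fun m hm => by
    have hm' := AbsorbsChains.natCast_le_orderDim (P := P) hm
    rw [hd] at hm'
    exact_mod_cast hm'⟩ h

theorem orderDim_le_of_orderEmbedding_prod_pi {α : Type u} [PartialOrder α] {ι : Type*}
    [Finite ι] {T : ι → Type u} [∀ i, LinearOrder (T i)] [∀ i, Nonempty (T i)]
    (hι : Nat.card ι ≤ absorb P) (f : α ↪o P × ∀ i, T i) : orderDim α ≤ orderDim P := by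
  let W := Sum.elim T fun _ : Fin (absorb P - Nat.card ι) => PUnit.{u + 1}
  let e : ι ⊕ Fin (absorb P - Nat.card ι) ≃ Fin (absorb P) :=
    ((Finite.equivFin ι).sumCongr (.refl _)).trans (finSumFinEquiv.trans (finCongr (by omega)))
  let pad : (∀ i, T i) ↪o ∀ k, W (e.symm k) :=
    ((OrderEmbedding.prodMkRight fun _ => .unit).trans
      (OrderIso.sumPiEquivProdPi W).symm.toOrderEmbedding).trans
        (OrderEmbedding.piPrecomp W e.symm.surjective)
  calc orderDim α ≤ orderDim (P × ∀ k, W (e.symm k)) :=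
        OrderEmbedding.orderDim_le (f.trans ((OrderIso.refl P).toOrderEmbedding.prodMap pad))
    _ = orderDim P := absorbsChains_absorb P _

theorem orderDim_prod_eq_of_orderDim_le_absorb [Nonempty Q] {d : ℕ} (hQ : orderDim Q = d)
    (h : d ≤ absorb P) : orderDim (P × Q) = orderDim P := by
  obtain ⟨C, ⟨g⟩⟩ := exists_orderEmbedding_pi_of_orderDim_eq hQ
  have : ∀ i, Nonempty (C i) := fun i => ⟨g (Classical.arbitrary Q) i⟩
  exact le_antisymm (orderDim_le_of_orderEmbedding_prod_pi (by rwa [Nat.card_fin])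
    ((OrderIso.refl P).toOrderEmbedding.prodMap g)) orderDim_le_orderDim_prod_left

theorem absorbsChains_prod_of_orderDim_le_absorb [Nonempty Q] {d : ℕ} (hQ : orderDim Q = d)
    (h : d ≤ absorb P) : AbsorbsChains (P × Q) (absorb P - d + absorb Q) := by
  intro T _ _
  let T₁ (j : Fin (absorb P - d)) := T (finSumFinEquiv (.inl j))
  let T₂ (j : Fin (absorb Q)) := T (finSumFinEquiv (.inr j))
  let split : (∀ k, T k) ↪o (∀ j, T₁ j) × ∀ j, T₂ j :=
    (OrderEmbedding.piPrecomp T finSumFinEquiv.surjective).trans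
      (OrderIso.sumPiEquivProdPi _).toOrderEmbedding
  obtain ⟨C, ⟨g⟩⟩ :=
    exists_orderEmbedding_pi_of_orderDim_eq ((absorbsChains_absorb Q T₂).trans hQ)
  have : ∀ i, Nonempty (C i) := fun i => ⟨g (Classical.arbitrary _) i⟩
  let F : (P × Q) × (∀ k, T k) ↪o P × ((∀ j, T₁ j) × ∀ i, C i) :=
    OrderEmbedding.ofMapLEIff (fun x => (x.1.1, (split x.2).1, g (x.1.2, (split x.2).2)))
      fun x y => by
        change _ ↔ (x.1.1 ≤ y.1.1 ∧ x.1.2 ≤ y.1.2) ∧ x.2 ≤ y.2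
        rw [← split.le_iff_le, Prod.le_def (x := split x.2)]
        simp only [Prod.mk_le_mk, g.le_iff_le]
        tauto
  apply le_antisymm
  · calc _ ≤ orderDim P := orderDim_le_of_orderEmbedding_prod_pi
          (by rw [Nat.card_sum, Nat.card_fin, Nat.card_fin]; omega)
          (F.trans ((OrderIso.refl P).toOrderEmbedding.prodMap
            (OrderIso.sumPiEquivProdPi (Sum.elim T₁ fun i => C i)).symm.toOrderEmbedding))
      _ = orderDim (P × Q) := (orderDim_prod_eq_of_orderDim_le_absorb hQ h).symm
  · exact orderDim_le_orderDim_prod_left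

end Absorbency

theorem stmt14 (P Q : Type u) [PartialOrder P] [Nonempty P] [PartialOrder Q] [Nonempty Q]
    (dP dQ : ℕ) (hdP : orderDim P = dP) (hdQ : orderDim Q = dQ)
    (habs : dQ ≤ absorb P) :
    orderDim (P × Q) = dP ∧ absorb P - dQ + absorb Q ≤ absorb (P × Q) := by
  have hPQ : orderDim (P × Q) = dP := (orderDim_prod_eq_of_orderDim_le_absorb hdQ habs).trans hdP
  exact ⟨hPQ, (absorbsChains_prod_of_orderDim_le_absorb hdQ habs).le_absorb hPQ⟩
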